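/- Let v_1,...,v_n be vectors in ℂ^d, and for A ⊆ {1,...,n} let Π(A) denote the orthogonal projection onto span{v_i : i ∈ A}, with Π(∅) = 0. Define the Möbius operators 𝔇(A) = ∑_{B ⊆ A} (−1)^{|A|−|B|} Π(B). Let p : {1,...,n} → [0,∞) and let σ be a ranking permutation of p. Then ∑_{i=1}^{n} p(σ(i))·(Π({σ(i), σ(i+1),...,σ(n)}) − Π({σ(i+1),...,σ(n)})) = ∑_{∅ ≠ A ⊆ {1,...,n}} (min_{i ∈ A} p(i)) · 𝔇(A); that is, the Choquet integral equals the sum over all nonempty subsets A of the Möbius operator 𝔇(A) weighted by the minimum of p over A. -/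

import Mathlib

/-- The matrix (w.r.t. the standard basis) of the orthogonal projection of `ℂ^d`
onto the span of a set `S` of vectors. -/
noncomputable def projMat {d : ℕ} (S : Set (EuclideanSpace ℂ (Fin d))) :
    Matrix (Fin d) (Fin d) ℂ :=
  LinearMap.toMatrix (EuclideanSpace.basisFun (Fin d) ℂ).toBasis
    (EuclideanSpace.basisFun (Fin d) ℂ).toBasis
    ((Submodule.span ℂ S).subtype ∘ₗ
      (Submodule.orthogonalProjection (Submodule.span ℂ S)).toLinearMap)

/-- `Π(A)`: the orthogonal projection onto `span {v i : i ∈ A}` (equal to `0` for `A = ∅`). -/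
noncomputable def projMatSet {d n : ℕ} (v : Fin n → EuclideanSpace ℂ (Fin d))
    (A : Finset (Fin n)) : Matrix (Fin d) (Fin d) ℂ :=
  projMat (v '' ↑A)

/-- The Möbius operators `𝔇(A) = ∑_{B ⊆ A} (−1)^{|A|−|B|} Π(B)`. -/
noncomputable def mobiusOp {d n : ℕ} (v : Fin n → EuclideanSpace ℂ (Fin d))
    (A : Finset (Fin n)) : Matrix (Fin d) (Fin d) ℂ :=
  ∑ B ∈ A.powerset, ((-1 : ℝ) ^ (A.card - B.card)) • projMatSet v B

/-- The set `{σ(i), σ(i+1), ..., σ(n)}`. -/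
def tailSet {n : ℕ} (σ : Equiv.Perm (Fin n)) (i : Fin n) : Finset (Fin n) :=
  (Finset.univ.filter fun j : Fin n => i ≤ j).image σ

/-- The set `{σ(i+1), ..., σ(n)}` (empty when `i = n`). -/
def strictTailSet {n : ℕ} (σ : Equiv.Perm (Fin n)) (i : Fin n) : Finset (Fin n) :=
  (Finset.univ.filter fun j : Fin n => i < j).image σ

/-!
Möbius inversion on the Boolean lattice gives `Π(C) = ∑_{A ⊆ C} 𝔇(A)`, so the increment
`Π({σ i, …, σ n}) - Π({σ (i+1), …, σ n})` is the sum of `𝔇(A)` over the sets `A` whose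
`σ`-least element is `σ i`. Every nonempty `A` arises for exactly one `i`, and for it
`min_{a ∈ A} p a = p (σ i)` because `p ∘ σ` is monotone.
-/

open Finset

section Mobius

variable {α R M : Type*} [DecidableEq α] [CommRing R] [AddCommGroup M] [Module R M]

variable (R) in
def mobiusTransform (f : Finset α → M) (A : Finset α) : M :=
  ∑ B ∈ A.powerset, ((-1 : R) ^ (#A - #B)) • f B

theorem sum_Icc_neg_one_pow_card_sub {B C : Finset α} (hBC : B ⊆ C) :
    ∑ A ∈ Icc B C, (-1 : R) ^ (#A - #B) = if B = C then 1 else 0 := by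
  have hinj : Set.InjOn (B ∪ ·) ((C \ B).powerset : Set (Finset α)) := by
    intro X hX Y hY hXY
    have hX' : Disjoint B X := disjoint_of_subset_right (mem_powerset.mp hX) disjoint_sdiff
    have hY' : Disjoint B Y := disjoint_of_subset_right (mem_powerset.mp hY) disjoint_sdiff
    simpa [union_sdiff_cancel_left hX', union_sdiff_cancel_left hY'] using
      congrArg (· \ B) hXY
  rw [Icc_eq_image_powerset hBC, sum_image hinj]
  have hcard : ∀ X ∈ (C \ B).powerset, #(B ∪ X) - #B = #X := fun X hX => by
    rw [card_union_of_disjoint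
      (disjoint_of_subset_right (mem_powerset.mp hX) disjoint_sdiff)]
    omega
  rw [sum_congr rfl fun X hX => by rw [hcard X hX]]
  have := congrArg (Int.cast : ℤ → R) (sum_powerset_neg_one_pow_card (x := C \ B))
  push_cast at this
  rw [this]
  exact if_congr (sdiff_eq_empty_iff_subset.trans ⟨hBC.antisymm, fun h => h ▸ subset_rfl⟩) rfl rfl

theorem sum_powerset_mobiusTransform (f : Finset α → M) (C : Finset α) :
    ∑ A ∈ C.powerset, mobiusTransform R f A = f C := by
  unfold mobiusTransform
  rw [sum_comm' (t' := C.powerset) (s' := fun B => Icc B C) (fun A B => by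
    simp only [mem_powerset, mem_Icc]
    exact ⟨fun ⟨hAC, hBA⟩ => ⟨⟨hBA, hAC⟩, hBA.trans hAC⟩, fun ⟨h, _⟩ => ⟨h.2, h.1⟩⟩)]
  simp_rw [← sum_smul]
  rw [sum_congr rfl fun B hB => by rw [sum_Icc_neg_one_pow_card_sub (mem_powerset.mp hB)]]
  simp [ite_smul]

theorem sub_eq_sum_mobiusTransform_insert (f : Finset α → M) {a : α} {s : Finset α}
    (ha : a ∉ s) :
    f (insert a s) - f s = ∑ B ∈ s.powerset, mobiusTransform R f (insert a B) := by
  rw [← sum_powerset_mobiusTransform (R := R) f (insert a s),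
    ← sum_powerset_mobiusTransform (R := R) f s, sum_powerset_insert ha, add_sub_cancel_left]

end Mobius

theorem sum_powerset_image_eq_add_sum_insert {ι α M : Type*} [LinearOrder ι] [DecidableEq α]
    [AddCommMonoid M] {σ : ι → α} (hσ : Function.Injective σ) (F : Finset α → M)
    (s : Finset ι) :
    ∑ A ∈ (s.image σ).powerset, F A =
      F ∅ + ∑ i ∈ s, ∑ B ∈ ((s.filter (i < ·)).image σ).powerset, F (insert (σ i) B) := by
  induction s using Finset.induction_on_min with
  | empty => simp
  | insert a s ha_lt ih =>
    have ha : a ∉ s := fun h => lt_irrefl a (ha_lt a h)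
    have hσa : σ a ∉ s.image σ := by simpa [hσ.eq_iff] using ha
    have filter_self : (insert a s).filter (a < ·) = s := by
      rw [filter_insert, if_neg (lt_irrefl a), filter_true_of_mem ha_lt]
    have sum_filter_insert :
        ∑ i ∈ s, ∑ B ∈ (((insert a s).filter (i < ·)).image σ).powerset, F (insert (σ i) B) =
          ∑ i ∈ s, ∑ B ∈ ((s.filter (i < ·)).image σ).powerset, F (insert (σ i) B) :=
      sum_congr rfl fun i hi => by rw [filter_insert, if_neg (ha_lt i hi).not_gt]
    rw [image_insert, sum_powerset_insert hσa, sum_insert ha, filter_self, sum_filter_insert, ih]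
    abel

theorem sInf_image_insert_of_le {α β : Type*} [DecidableEq α] [ConditionallyCompleteLattice β]
    {p : α → β} {a : α} {B : Finset α} (h : ∀ b ∈ B, p a ≤ p b) :
    sInf (p '' ↑(insert a B)) = p a := by
  refine IsLeast.csInf_eq ⟨⟨a, by simp, rfl⟩, ?_⟩
  rintro _ ⟨b, hb, rfl⟩
  rcases mem_insert.mp hb with rfl | hb
  · exact le_rfl
  · exact h b hb

theorem tailSet_eq_insert_strictTailSet {n : ℕ} (σ : Equiv.Perm (Fin n)) (i : Fin n) :
    tailSet σ i = insert (σ i) (strictTailSet σ i) := by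
  simp only [tailSet, strictTailSet, ← image_insert]
  congr 1
  ext j
  simp [le_iff_eq_or_lt, eq_comm]

theorem apply_notMem_strictTailSet {n : ℕ} (σ : Equiv.Perm (Fin n)) (i : Fin n) :
    σ i ∉ strictTailSet σ i := by
  simp [strictTailSet]

theorem choquet_matrix_eq_mobius_sum_general {d n : ℕ}
    (v : Fin n → EuclideanSpace ℂ (Fin d))
    (p : Fin n → ℝ)
    (σ : Equiv.Perm (Fin n)) (hσ : Monotone fun i => p (σ i)) :
    ∑ i : Fin n, p (σ i) •
        (projMatSet v (tailSet σ i) - projMatSet v (strictTailSet σ i)) =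
      ∑ A ∈ Finset.univ.powerset.filter (fun A : Finset (Fin n) => A.Nonempty),
        sInf (p '' ↑A) • mobiusOp v A := by
  have hmin : ∀ i, ∀ B ⊆ strictTailSet σ i, sInf (p '' ↑(insert (σ i) B)) = p (σ i) := by
    refine fun i B hB => sInf_image_insert_of_le fun b hb => ?_
    obtain ⟨j, hij, rfl⟩ := mem_image.mp (hB hb)
    exact hσ (mem_filter.mp hij).2.le
  calc _ = ∑ i, ∑ B ∈ (strictTailSet σ i).powerset,
        sInf (p '' ↑(insert (σ i) B)) • mobiusOp v (insert (σ i) B) := by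
        refine sum_congr rfl fun i _ => ?_
        rw [tailSet_eq_insert_strictTailSet, sub_eq_sum_mobiusTransform_insert (R := ℝ) _
          (apply_notMem_strictTailSet σ i), smul_sum]
        exact sum_congr rfl fun B hB => by rw [hmin i B (mem_powerset.mp hB)]; rfl
    _ = ∑ A ∈ univ.powerset, sInf (p '' ↑A) • mobiusOp v A := by
        -- the empty set contributes nothing since `sInf ∅ = 0` in `ℝ`
        conv_rhs => rw [← image_univ_equiv σ, sum_powerset_image_eq_add_sum_insert σ.injective,
          coe_empty, Set.image_empty, Real.sInf_empty, zero_smul, zero_add]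
        rfl
    _ = _ := by
        refine (sum_filter_of_ne fun A _ hA => nonempty_iff_ne_empty.mpr ?_).symm
        rintro rfl
        simp at hA

/-- the Choquet integral built from the cumulative projectors of a
ranking permutation `σ` of `p` equals the sum over all nonempty subsets `A` of the
Möbius operator `𝔇(A)` weighted by `min_{i ∈ A} p i` (written as `sInf (p '' A)`). -/
theorem choquet_matrix_eq_mobius_sum {d n : ℕ}
    (v : Fin n → EuclideanSpace ℂ (Fin d))
    (p : Fin n → ℝ) (hp : ∀ i, 0 ≤ p i)
    (σ : Equiv.Perm (Fin n)) (hσ : Monotone fun i => p (σ i)) :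
    ∑ i : Fin n, p (σ i) •
        (projMatSet v (tailSet σ i) - projMatSet v (strictTailSet σ i)) =
      ∑ A ∈ Finset.univ.powerset.filter (fun A : Finset (Fin n) => A.Nonempty),
        sInf (p '' ↑A) • mobiusOp v A :=
  choquet_matrix_eq_mobius_sum_general v p σ hσ
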